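/- arXiv:1710.05946 — 2 statements merged into one kernel-verified Lean document; each statement's English description precedes it below -/
import Mathlib

section
/- For the product of k unit spheres X_k = Sⁿ¹ × ⋯ × Sⁿᵏ embedded in ℝ^{(n₁+1)+⋯+(nₖ+1)} as the product of spheres of radius 1/√k centered so that the image lies in the unit ball, the normal injectivity radius of this embedding is at least 1/√k; hence suprad^⊥_N(X_k) ≥ 1/√k for N ≥ (n₁+1)+⋯+(nₖ+1). -/
/-- let `X_k = Sⁿ¹ × ⋯ × Sⁿᵏ` be embedded in
`ℝ^N = ℝ^{n₁+1} × ⋯ × ℝ^{nₖ+1}` as the product of the spheres of radius `1/√k`.  Then the image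
lies in the unit sphere (hence in the unit ball), and the normal exponential map
`(x,v) ↦ x + v` — where `v` is normal to `X_k` at `x`, i.e. each block `v_a` is a multiple of
`x_a` — is injective on normal vectors of norm `< 1/√k`.  Hence the normal injectivity radius
of the embedding is at least `1/√k`, so `suprad⊥_N(X_k) ≥ 1/√k` for `N ≥ (n₁+1)+⋯+(nₖ+1)`. -/
theorem prod_spheres_normal_injectivity_radius
    (k : ℕ) (hk : 0 < k) (n : Fin k → ℕ) :
    (∀ x : (a : Fin k) → EuclideanSpace ℝ (Fin (n a + 1)),
      (∀ a, ‖x a‖ = 1 / Real.sqrt k) → (∑ a, ‖x a‖ ^ 2) = 1) ∧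
    Set.InjOn
      (fun p : ((a : Fin k) → EuclideanSpace ℝ (Fin (n a + 1))) ×
               ((a : Fin k) → EuclideanSpace ℝ (Fin (n a + 1))) =>
        fun a => p.1 a + p.2 a)
      {p | (∀ a, ‖p.1 a‖ = 1 / Real.sqrt k) ∧ (∀ a, ∃ t : ℝ, p.2 a = t • p.1 a) ∧
           (∑ a, ‖p.2 a‖ ^ 2) < (1 / Real.sqrt k) ^ 2} := by
  have hk0 : (0:ℝ) < k := by exact_mod_cast hk
  have hs : (0:ℝ) < Real.sqrt k := Real.sqrt_pos.mpr hk0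
  set r : ℝ := 1 / Real.sqrt k with hr
  have hrpos : 0 < r := by positivity
  constructor
  · intro x hx
    have : (∑ a : Fin k, ‖x a‖ ^ 2) = ∑ a : Fin k, r ^ 2 := by
      refine Finset.sum_congr rfl fun a _ => by rw [hx a]
    rw [this, Finset.sum_const, Finset.card_univ, Fintype.card_fin, nsmul_eq_mul]
    have : r ^ 2 = 1 / k := by
      rw [hr, div_pow, one_pow, Real.sq_sqrt hk0.le]
    rw [this]
    field_simp
  · rintro ⟨x, u⟩ ⟨hx, hu, hsu⟩ ⟨y, w⟩ ⟨hy, hw, hsw⟩ heq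
    simp only at heq
    dsimp only at hx hu hsu hy hw hsw
    -- each normal piece has norm < r
    have key : ∀ (z v : (a : Fin k) → EuclideanSpace ℝ (Fin (n a + 1))),
        (∑ a, ‖v a‖ ^ 2) < r ^ 2 → ∀ a, ‖v a‖ < r := by
      intro z v hv a
      have h1 : ‖v a‖ ^ 2 ≤ ∑ b, ‖v b‖ ^ 2 :=
        Finset.single_le_sum (f := fun b => ‖v b‖ ^ 2) (fun b _ => by positivity)
          (Finset.mem_univ a)
      exact lt_of_pow_lt_pow_left₀ 2 hrpos.le (lt_of_le_of_lt h1 hv)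
    have hab : ∀ a, x a = y a ∧ u a = w a := by
      intro a
      obtain ⟨t, ht⟩ := hu a
      obtain ⟨s, hsa⟩ := hw a
      have htlt : |t| < 1 := by
        have := key x u hsu a
        rw [ht, norm_smul, Real.norm_eq_abs, hx a] at this
        exact (mul_lt_iff_lt_one_left hrpos).mp this
      have hslt : |s| < 1 := by
        have := key y w hsw a
        rw [hsa, norm_smul, Real.norm_eq_abs, hy a] at this
        exact (mul_lt_iff_lt_one_left hrpos).mp this
      have htpos : 0 < 1 + t := by cases abs_lt.mp htlt; linarith
      have hspos : 0 < 1 + s := by cases abs_lt.mp hslt; linarith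
      have heqa : (1 + t) • x a = (1 + s) • y a := by
        have := congrFun heq a
        rw [ht, hsa] at this
        rw [add_smul, add_smul, one_smul, one_smul]
        exact this
      have hn : (1 + t) * r = (1 + s) * r := by
        have := congrArg norm heqa
        rwa [norm_smul, norm_smul, Real.norm_eq_abs, Real.norm_eq_abs, hx a, hy a,
          abs_of_pos htpos, abs_of_pos hspos] at this
      have hts : t = s := by
        have := mul_right_cancel₀ hrpos.ne' hn
        linarith
      have hxy : x a = y a := by
        have := heqa
        rw [hts] at this
        exact smul_right_injective _ hspos.ne' this
      exact ⟨hxy, by rw [ht, hsa, hts, hxy]⟩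
    have hx' : x = y := funext fun a => (hab a).1
    have hu' : u = w := funext fun a => (hab a).2
    simp [hx', hu']
end

section
/- Every convex polyhedron P ⊂ ℝⁿ all of whose dihedral angles are at most π/2 is extremal: any combinatorially equivalent convex polyhedron P' with ∠_{ij}(P') ≤ ∠_{ij}(P) for all adjacent face pairs (i,j) must satisfy ∠_{ij}(P') = ∠_{ij}(P) for all (i,j). -/
/-!
Non-obtuse dihedral angles mean `⟪u i, u j⟫ ≤ 0` for adjacent facets. Maximising `⟪u j, ·⟫` over
the facet `Q_i` and reading off the Lagrange multipliers (Farkas' lemma) writes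
`u j = α • u i + ∑ β k • u k` with `α < 0` and `β ≥ 0` supported on facets meeting `Q_i`. Hence in
a non-obtuse polyhedron all normals make non-acute angles, and normals of disjoint facets are
opposite: `⟪u i, u j⟫ = -1`. This applies to `P'` too, whose angles are even smaller, so the Gram
matrix of the normals of `P'` is entrywise at most that of `P`. As `P` is bounded,
`∑ λ i • u i = 0` for some `λ > 0`, and `0 ≤ ‖∑ λ i • u' i‖² = ∑ λ i λ j ⟪u' i, u' j⟫ ≤
∑ λ i λ j ⟪u i, u j⟫ = 0` forces the two Gram matrices to agree.
-/

open scoped RealInnerProductSpace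
open Finset Topology

namespace PointedCone

section Module

variable {E κ : Type*} [AddCommGroup E] [Module ℝ E] {v : κ → E} {s : Finset κ} {x : E}

theorem mem_hull_image_finset_iff :
    x ∈ hull ℝ (v '' s) ↔ ∃ t : κ → ℝ, (∀ k ∈ s, 0 ≤ t k) ∧ ∑ k ∈ s, t k • v k = x := by
  rw [Submodule.mem_span_image_finset_iff_exists_fun']
  constructor
  · rintro ⟨c, rfl⟩
    exact ⟨fun k => c k, fun k _ => (c k).2, by simp only [Nonneg.coe_smul]⟩
  · rintro ⟨t, ht, rfl⟩
    refine ⟨fun k => ⟨max (t k) 0, le_max_right _ _⟩, Finset.sum_congr rfl fun k hk => ?_⟩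
    rw [Nonneg.mk_smul, max_eq_left (ht k hk)]

theorem exists_mem_hull_image_erase_of_sum_smul_eq_zero [DecidableEq κ] {g : κ → ℝ}
    (hg : ∑ k ∈ s, g k • v k = 0) (hpos : ∃ k ∈ s, 0 < g k) (hx : x ∈ hull ℝ (v '' s)) :
    ∃ k ∈ s, x ∈ hull ℝ (v '' ↑(s.erase k)) := by
  obtain ⟨t, ht, rfl⟩ := mem_hull_image_finset_iff.1 hx
  set T := s.filter fun k => 0 < g k
  have hT : T.Nonempty := by simpa [T, Finset.filter_nonempty_iff] using hpos
  obtain ⟨k₀, hk₀T, hmin⟩ := T.exists_min_image (fun k => t k / g k) hT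
  obtain ⟨hk₀, hgk₀⟩ := Finset.mem_filter.1 hk₀T
  set r := t k₀ / g k₀
  have hr : 0 ≤ r := div_nonneg (ht k₀ hk₀) hgk₀.le
  refine ⟨k₀, hk₀, mem_hull_image_finset_iff.2 ⟨fun k => t k - r * g k, fun k hk => ?_, ?_⟩⟩
  · have hk := (Finset.mem_erase.1 hk).2
    rcases le_or_gt (g k) 0 with hgk | hgk
    · nlinarith [ht k hk]
    · have := hmin k (Finset.mem_filter.2 ⟨hk, hgk⟩)
      rw [le_div_iff₀ hgk] at this
      linarith
  · have hzero : t k₀ - r * g k₀ = 0 := by simp [r, div_mul_cancel₀ _ hgk₀.ne']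
    rw [Finset.sum_erase _ (by simp only [hzero, zero_smul])]
    simp only [sub_smul, mul_smul, Finset.sum_sub_distrib, ← Finset.smul_sum, hg, smul_zero,
      sub_zero]

theorem exists_linearIndepOn_of_mem_hull_image (hx : x ∈ hull ℝ (v '' s)) :
    ∃ s' ⊆ s, LinearIndepOn ℝ v (s' : Set κ) ∧ x ∈ hull ℝ (v '' s') := by
  classical
  induction s using Finset.strongInduction with
  | H s ih =>
    by_cases hli : LinearIndepOn ℝ v (s : Set κ)
    · exact ⟨s, subset_rfl, hli, hx⟩
    obtain ⟨g, hg, k, hk, hgk⟩ := not_linearIndepOn_finset_iff.1 hli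
    obtain ⟨k₀, hk₀, hx'⟩ : ∃ k ∈ s, x ∈ hull ℝ (v '' ↑(s.erase k)) := by
      rcases hgk.lt_or_gt with hneg | hpos
      · refine exists_mem_hull_image_erase_of_sum_smul_eq_zero (g := -g) ?_ ⟨k, hk, by simpa⟩ hx
        simp [neg_smul, hg]
      · exact exists_mem_hull_image_erase_of_sum_smul_eq_zero hg ⟨k, hk, hpos⟩ hx
    obtain ⟨s', hs', hli', hx''⟩ := ih _ (Finset.erase_ssubset hk₀) hx'
    exact ⟨s', hs'.trans (Finset.erase_subset _ _), hli', hx''⟩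

end Module

section Topology

variable {E κ : Type*} [NormedAddCommGroup E] [NormedSpace ℝ E] {v : κ → E} {s : Finset κ}

theorem isClosed_hull_image_of_linearIndepOn (hs : LinearIndepOn ℝ v (s : Set κ)) :
    IsClosed (hull ℝ (v '' s) : Set E) := by
  let L := Fintype.linearCombination ℝ fun k : s => v k
  have hL : IsClosedEmbedding L := LinearMap.isClosedEmbedding_of_injective
    (LinearMap.ker_eq_bot.2 hs.fintypeLinearCombination_injective)
  have : (hull ℝ (v '' s) : Set E) = L '' Set.Ici 0 := by
    ext x
    simp only [SetLike.mem_coe, Submodule.mem_span_image_finset_iff_exists_fun, Set.mem_image,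
      Set.mem_Ici, L, Fintype.linearCombination_apply]
    constructor
    · rintro ⟨c, rfl⟩
      exact ⟨fun k => c k, fun k => (c k).2, by simp only [Nonneg.coe_smul]⟩
    · rintro ⟨t, ht, rfl⟩
      exact ⟨fun k => ⟨t k, ht k⟩, rfl⟩
  rw [this]
  exact hL.isClosedMap _ isClosed_Ici

theorem isClosed_hull_image_finset : IsClosed (hull ℝ (v '' s) : Set E) := by
  have : (hull ℝ (v '' s) : Set E) =
      ⋃ s' ∈ {s' | s' ⊆ s ∧ LinearIndepOn ℝ v (s' : Set κ)}, (hull ℝ (v '' s') : Set E) := by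
    ext x
    simp only [Set.mem_iUnion, Set.mem_ofPred_eq, SetLike.mem_coe, exists_prop]
    constructor
    · intro hx
      obtain ⟨s', hs', hli, hx'⟩ := exists_linearIndepOn_of_mem_hull_image hx
      exact ⟨s', ⟨hs', hli⟩, hx'⟩
    · rintro ⟨s', ⟨hs', -⟩, hx⟩
      exact Submodule.span_mono (Set.image_mono (Finset.coe_subset.2 hs')) hx
  rw [this]
  refine Set.Finite.isClosed_biUnion ?_ fun s' hs' => isClosed_hull_image_of_linearIndepOn hs'.2
  exact s.powerset.finite_toSet.subset fun s' hs' => Finset.mem_powerset.2 hs'.1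

end Topology

end PointedCone

theorem exists_nonneg_sum_smul_eq_of_forall_inner_nonpos {E κ : Type*} [NormedAddCommGroup E]
    [InnerProductSpace ℝ E] [CompleteSpace E] {v : κ → E} {s : Finset κ} {x : E}
    (h : ∀ d, (∀ k ∈ s, ⟪v k, d⟫ ≤ 0) → ⟪x, d⟫ ≤ 0) :
    ∃ t : κ → ℝ, (∀ k ∈ s, 0 ≤ t k) ∧ ∑ k ∈ s, t k • v k = x := by
  rw [← PointedCone.mem_hull_image_finset_iff]
  by_contra hx
  let C : ProperCone ℝ E := ⟨PointedCone.hull ℝ (v '' s), PointedCone.isClosed_hull_image_finset⟩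
  obtain ⟨y, hy, hxy⟩ := ProperCone.hyperplane_separation' C hx
  have := h (-y) fun k hk => by
    simpa [inner_neg_right] using hy (v k) (PointedCone.subset_hull ⟨k, hk, rfl⟩)
  simp only [inner_neg_right] at this
  linarith

theorem eq_zero_of_forall_add_smul_mem {F : Type*} [NormedAddCommGroup F] [NormedSpace ℝ F]
    {s : Set F} (hs : Bornology.IsBounded s) {x d : F} (h : ∀ t : ℝ, 0 ≤ t → x + t • d ∈ s) :
    d = 0 := by
  obtain ⟨R, hR⟩ := hs.exists_norm_le
  by_contra hd
  have hd' : 0 < ‖d‖ := norm_pos_iff.2 hd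
  have hx := hR x (by simpa using h 0 le_rfl)
  set t := (2 * R + 1) / ‖d‖
  have ht : t * ‖d‖ = 2 * R + 1 := div_mul_cancel₀ _ hd'.ne'
  have ht0 : 0 ≤ t := div_nonneg (by linarith [norm_nonneg x]) hd'.le
  have htd := hR _ (h t ht0)
  have := norm_sub_le (x + t • d) x
  rw [add_sub_cancel_left, norm_smul, Real.norm_of_nonneg ht0] at this
  linarith

section Polyhedron

variable {E ι : Type*} [NormedAddCommGroup E] [InnerProductSpace ℝ E]

def polyhedron (u : ι → E) (c : ι → ℝ) : Set E := {x | ∀ i, ⟪u i, x⟫ ≤ c i}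

theorem isClosed_polyhedron (u : ι → E) (c : ι → ℝ) : IsClosed (polyhedron u c) := by
  simp only [polyhedron, Set.ofPred_forall]
  exact isClosed_iInter fun i => isClosed_le (by fun_prop) continuous_const

theorem exists_pos_add_smul_mem_polyhedron [Finite ι] {u : ι → E} {c : ι → ℝ}
    {p d : E} (hp : p ∈ polyhedron u c) (hd : ∀ i, ⟪u i, p⟫ = c i → ⟪u i, d⟫ ≤ 0) :
    ∃ ε : ℝ, 0 < ε ∧ p + ε • d ∈ polyhedron u c := by
  have hev : ∀ i, ∀ᶠ ε in 𝓝[>] (0 : ℝ), ⟪u i, p + ε • d⟫ ≤ c i := by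
    intro i
    simp only [inner_add_right, real_inner_smul_right]
    rcases (hp i).lt_or_eq with hlt | heq
    · refine (Filter.Tendsto.eventually_lt ?_ tendsto_const_nhds (by simpa using hlt)).mono
        fun ε => le_of_lt
      exact ((continuous_const.add (continuous_id.mul continuous_const)).tendsto' 0 _
        (by simp)).mono_left nhdsWithin_le_nhds
    · filter_upwards [self_mem_nhdsWithin] with ε (hε : 0 < ε)
      nlinarith [hd i heq]
  obtain ⟨ε, hε, hεpos⟩ := ((Filter.eventually_all.2 hev).and self_mem_nhdsWithin).exists
  exact ⟨ε, hεpos, hε⟩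

theorem exists_nonneg_sum_smul_eq_of_isMaxOn [CompleteSpace E] [Fintype ι] {u : ι → E}
    {c : ι → ℝ} {w p : E} (hp : p ∈ polyhedron u c)
    (hmax : IsMaxOn (fun x => ⟪w, x⟫) (polyhedron u c) p) :
    ∃ t : ι → ℝ, (∀ i, 0 ≤ t i) ∧ (∀ i, t i ≠ 0 → ⟪u i, p⟫ = c i) ∧ ∑ i, t i • u i = w := by
  classical
  set A := univ.filter fun i => ⟪u i, p⟫ = c i
  obtain ⟨t, ht, hsum⟩ := exists_nonneg_sum_smul_eq_of_forall_inner_nonpos (s := A) (v := u)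
    (x := w) fun d hd => by
      obtain ⟨ε, hε, hmem⟩ := exists_pos_add_smul_mem_polyhedron hp fun i hi =>
        hd i (Finset.mem_filter.2 ⟨mem_univ _, hi⟩)
      have := hmax hmem
      simp only [Set.mem_ofPred_eq, inner_add_right, real_inner_smul_right] at this
      nlinarith
  refine ⟨fun i => if ⟪u i, p⟫ = c i then t i else 0, fun i => ?_, fun i hi => ?_, ?_⟩
  · dsimp only
    split_ifs with h
    exacts [ht i (Finset.mem_filter.2 ⟨mem_univ _, h⟩), le_rfl]
  · by_contra h
    exact hi (if_neg h)
  · simp only [← hsum, A, Finset.sum_filter, ite_smul, zero_smul]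

theorem exists_pos_sum_smul_eq_zero_of_isBounded [CompleteSpace E] [Fintype ι] {u : ι → E}
    {c : ι → ℝ} (hb : Bornology.IsBounded (polyhedron u c)) (hne : (polyhedron u c).Nonempty) :
    ∃ l : ι → ℝ, (∀ i, 0 < l i) ∧ ∑ i, l i • u i = 0 := by
  obtain ⟨x₀, hx₀⟩ := hne
  obtain ⟨t, ht, hsum⟩ := exists_nonneg_sum_smul_eq_of_forall_inner_nonpos (s := univ) (v := u)
    (x := -∑ i, u i) fun d hd => by
      have : d = 0 := eq_zero_of_forall_add_smul_mem hb (x := x₀) fun τ hτ i => by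
        have := hd i (mem_univ i)
        rw [inner_add_right, real_inner_smul_right]
        nlinarith [hx₀ i]
      simp [this]
  refine ⟨fun i => t i + 1, fun i => by linarith [ht i (mem_univ i)], ?_⟩
  simp only [add_smul, one_smul, Finset.sum_add_distrib, hsum, neg_add_cancel]

def FacetsMeet (u : ι → E) (c : ι → ℝ) (i j : ι) : Prop :=
  ∃ x ∈ polyhedron u c, ⟪u i, x⟫ = c i ∧ ⟪u j, x⟫ = c j

theorem polyhedron_option_elim (u : ι → E) (c : ι → ℝ) (i : ι) :
    polyhedron (Option.elim · (-u i) u) (Option.elim · (-c i) c) =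
      {x ∈ polyhedron u c | ⟪u i, x⟫ = c i} := by
  ext x
  simp only [polyhedron, Option.forall, Option.elim_none, Option.elim_some, inner_neg_left,
    neg_le_neg_iff, Set.mem_ofPred_eq]
  exact ⟨fun ⟨h, hx⟩ => ⟨hx, (hx i).antisymm h⟩, fun ⟨hx, h⟩ => ⟨h.ge, hx⟩⟩

theorem exists_smul_add_sum_smul_eq_of_isMaxOn_facet [CompleteSpace E] [Fintype ι] {u : ι → E}
    {c : ι → ℝ} {i : ι} {w p : E} (hp : p ∈ polyhedron u c)
    (hpi : ⟪u i, p⟫ = c i) (hmax : IsMaxOn (⟪w, ·⟫) {x ∈ polyhedron u c | ⟪u i, x⟫ = c i} p) :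
    ∃ (α : ℝ) (β : ι → ℝ), (∀ k, 0 ≤ β k) ∧ (∀ k, β k ≠ 0 → k ≠ i ∧ ⟪u k, p⟫ = c k) ∧
      w = α • u i + ∑ k, β k • u k := by
  classical
  rw [← polyhedron_option_elim] at hmax
  obtain ⟨t, ht, hact, rfl⟩ := exists_nonneg_sum_smul_eq_of_isMaxOn
    (by rw [polyhedron_option_elim]; exact ⟨hp, hpi⟩) hmax
  refine ⟨t (some i) - t none, fun k => if k = i then 0 else t (some k), fun k => ?_,
    fun k hk => ?_, ?_⟩
  · dsimp only
    split_ifs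
    exacts [le_rfl, ht _]
  · dsimp only at hk
    split_ifs at hk with h
    · exact absurd rfl hk
    · exact ⟨h, hact (some k) hk⟩
  · have hsplit : ∀ k, t (some k) • u k =
        (if k = i then t (some i) • u i else 0) + (if k = i then 0 else t (some k)) • u k := by
      intro k
      split_ifs with h
      · subst h; simp
      · simp
    simp only [Fintype.sum_option, Option.elim_none, Option.elim_some]
    rw [Finset.sum_congr rfl fun k _ => hsplit k]
    simp only [Finset.sum_add_distrib, Finset.sum_ite_eq', mem_univ, if_true, sub_smul, smul_neg]
    abel

theorem exists_neg_smul_add_sum_smul_of_not_facetsMeet [CompleteSpace E] [Fintype ι]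
    {u : ι → E} {c : ι → ℝ} (hcpt : IsCompact (polyhedron u c)) {i j : ι}
    (hi : ∃ x ∈ polyhedron u c, ⟪u i, x⟫ = c i) (hj : ∃ x ∈ polyhedron u c, ⟪u j, x⟫ = c j)
    (hij : ¬FacetsMeet u c i j) :
    ∃ α : ℝ, α < 0 ∧ ∃ β : ι → ℝ, (∀ k, 0 ≤ β k) ∧ (∀ k, β k ≠ 0 → k ≠ i ∧ FacetsMeet u c i k) ∧
      u j = α • u i + ∑ k, β k • u k := by
  have hQ : IsCompact {x ∈ polyhedron u c | ⟪u i, x⟫ = c i} :=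
    hcpt.of_isClosed_subset ((isClosed_polyhedron u c).inter (isClosed_eq (by fun_prop)
      continuous_const)) (Set.sep_subset _ _)
  obtain ⟨p, ⟨hp, hpi⟩, hmax⟩ :=
    hQ.exists_isMaxOn hi (by fun_prop : Continuous (⟪u j, ·⟫)).continuousOn
  obtain ⟨α, β, hβ, hβact, hdecomp⟩ := exists_smul_add_sum_smul_eq_of_isMaxOn_facet hp hpi hmax
  refine ⟨α, ?_, β, hβ, fun k hk => ⟨(hβact k hk).1, p, hp, hpi, (hβact k hk).2⟩, hdecomp⟩
  -- Against `q - p` with `q ∈ Q_j`, the pairing with `u j` is positive, with `u i` and every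
  -- `u k` (`k` active at `p`) nonpositive; this forces `α < 0`.
  obtain ⟨q, hq, hqj⟩ := hj
  have hpj : ⟪u j, p⟫ < c j := (hp j).lt_of_ne fun h => hij ⟨p, hp, hpi, h⟩
  have hexpand := congrArg (⟪·, q - p⟫) hdecomp
  simp only [inner_add_left, real_inner_smul_left, sum_inner] at hexpand
  have hsum : ∑ k, β k * ⟪u k, q - p⟫ ≤ 0 := Finset.sum_nonpos fun k _ => by
    by_cases hk : β k = 0
    · simp [hk]
    · exact mul_nonpos_of_nonneg_of_nonpos (hβ k)
        (by rw [inner_sub_right]; linarith [hq k, (hβact k hk).2])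
  have hqi : ⟪u i, q - p⟫ ≤ 0 := by rw [inner_sub_right]; linarith [hq i]
  have hqpj : 0 < ⟪u j, q - p⟫ := by rw [inner_sub_right]; linarith
  nlinarith

theorem inner_nonpos_of_forall_facetsMeet [CompleteSpace E] [Fintype ι] {u : ι → E}
    {c : ι → ℝ} (hcpt : IsCompact (polyhedron u c))
    (hfacet : ∀ l, ∃ x ∈ polyhedron u c, ⟪u l, x⟫ = c l)
    (hadj : ∀ k l, k ≠ l → FacetsMeet u c k l → ⟪u k, u l⟫ ≤ 0) {i j : ι} (hij : i ≠ j) :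
    ⟪u i, u j⟫ ≤ 0 := by
  by_cases h : FacetsMeet u c i j
  · exact hadj i j hij h
  obtain ⟨α, hα, β, hβ, hβi, hdecomp⟩ :=
    exists_neg_smul_add_sum_smul_of_not_facetsMeet hcpt (hfacet i) (hfacet j) h
  have hsum : ∑ k, β k * ⟪u i, u k⟫ ≤ 0 := Finset.sum_nonpos fun k _ => by
    by_cases hk : β k = 0
    · simp [hk]
    · exact mul_nonpos_of_nonneg_of_nonpos (hβ k) (hadj i k (hβi k hk).1.symm (hβi k hk).2)
  rw [hdecomp, inner_add_right, real_inner_smul_right, inner_sum]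
  simp only [real_inner_smul_right]
  nlinarith [real_inner_self_nonneg (x := u i)]

theorem inner_eq_neg_one_of_not_facetsMeet [CompleteSpace E] [Fintype ι] {u : ι → E}
    {c : ι → ℝ} (hu : ∀ k, ‖u k‖ = 1) (hcpt : IsCompact (polyhedron u c))
    (hfacet : ∀ l, ∃ x ∈ polyhedron u c, ⟪u l, x⟫ = c l)
    (hadj : ∀ k l, k ≠ l → FacetsMeet u c k l → ⟪u k, u l⟫ ≤ 0) {i j : ι}
    (hij : ¬FacetsMeet u c i j) :
    ⟪u i, u j⟫ = -1 := by
  have hall (k l : ι) (hkl : k ≠ l) : ⟪u k, u l⟫ ≤ 0 :=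
    inner_nonpos_of_forall_facetsMeet hcpt hfacet hadj hkl
  obtain ⟨α, hα, β, hβ, hβi, hdecomp⟩ :=
    exists_neg_smul_add_sum_smul_of_not_facetsMeet hcpt (hfacet i) (hfacet j) hij
  have hle : ⟪u i, u j⟫ ≤ α := by
    have hsum : ∑ k, β k * ⟪u i, u k⟫ ≤ 0 := Finset.sum_nonpos fun k _ => by
      by_cases hk : β k = 0
      · simp [hk]
      · exact mul_nonpos_of_nonneg_of_nonpos (hβ k) (hall i k (hβi k hk).1.symm)
    rw [hdecomp, inner_add_right, real_inner_smul_right, inner_sum,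
      inner_self_eq_one_of_norm_eq_one (hu i)]
    simp only [real_inner_smul_right]
    linarith
  have hge : 1 ≤ α * ⟪u i, u j⟫ := by
    have hsum : ∑ k, β k * ⟪u k, u j⟫ ≤ 0 := Finset.sum_nonpos fun k _ => by
      by_cases hk : β k = 0
      · simp [hk]
      · refine mul_nonpos_of_nonneg_of_nonpos (hβ k) (hall k j fun hkj => ?_)
        exact hij (hkj ▸ (hβi k hk).2)
    have hexpand := congrArg (⟪·, u j⟫) hdecomp
    simp only [inner_add_left, real_inner_smul_left, sum_inner,
      inner_self_eq_one_of_norm_eq_one (hu j)] at hexpand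
    linarith
  nlinarith [neg_one_le_real_inner_of_norm_eq_one (hu i) (hu j)]

end Polyhedron

theorem real_inner_eq_of_le_of_sum_smul_eq_zero {E ι : Type*} [NormedAddCommGroup E]
    [InnerProductSpace ℝ E] [Fintype ι] {u u' : ι → E} {l : ι → ℝ} (hl : ∀ i, 0 < l i)
    (hsum : ∑ i, l i • u i = 0) (hle : ∀ i j, ⟪u' i, u' j⟫ ≤ ⟪u i, u j⟫) (i j : ι) :
    ⟪u' i, u' j⟫ = ⟪u i, u j⟫ := by
  have hgram (w : ι → E) :
      ⟪∑ i, l i • w i, ∑ j, l j • w j⟫ = ∑ i, ∑ j, l i * (l j * ⟪w i, w j⟫) := by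
    simp only [sum_inner, inner_sum, real_inner_smul_left, real_inner_smul_right]
    rw [Finset.sum_comm]
    exact sum_congr rfl fun _ _ => sum_congr rfl fun _ _ => mul_left_comm _ _ _
  have hterm (i j : ι) : 0 ≤ l i * (l j * (⟪u i, u j⟫ - ⟪u' i, u' j⟫)) :=
    mul_nonneg (hl i).le (mul_nonneg (hl j).le (sub_nonneg.2 (hle i j)))
  have hzero : ∑ i, ∑ j, l i * (l j * (⟪u i, u j⟫ - ⟪u' i, u' j⟫)) = 0 := by
    refine le_antisymm ?_ (sum_nonneg fun i _ => sum_nonneg fun j _ => hterm i j)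
    simp only [mul_sub, Finset.sum_sub_distrib, ← hgram, hsum, inner_zero_left]
    linarith [real_inner_self_nonneg (x := ∑ i, l i • u' i)]
  have hij := (sum_eq_zero_iff_of_nonneg fun j _ => hterm i j).1
    ((sum_eq_zero_iff_of_nonneg fun i _ => sum_nonneg fun j _ => hterm i j).1 hzero i
      (mem_univ i)) j (mem_univ j)
  simp only [mul_eq_zero, (hl i).ne', (hl j).ne', false_or, sub_eq_zero] at hij
  exact hij.symm

theorem real_inner_le_of_arccos_le_arccos {E : Type*} [NormedAddCommGroup E]
    [InnerProductSpace ℝ E] {a b a' b' : E} (ha : ‖a‖ = 1) (hb : ‖b‖ = 1) (ha' : ‖a'‖ = 1)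
    (hb' : ‖b'‖ = 1) (h : Real.arccos ⟪a, b⟫ ≤ Real.arccos ⟪a', b'⟫) : ⟪a', b'⟫ ≤ ⟪a, b⟫ :=
  (Real.strictAntiOn_arccos.le_iff_ge
    ⟨neg_one_le_real_inner_of_norm_eq_one ha hb, real_inner_le_one_of_norm_eq_one ha hb⟩
    ⟨neg_one_le_real_inner_of_norm_eq_one ha' hb', real_inner_le_one_of_norm_eq_one ha' hb'⟩).1 h

theorem convex_polyhedron_nonobtuse_extremal_general
    (n : ℕ) (ι : Type*) [Fintype ι]
    (u u' : ι → EuclideanSpace ℝ (Fin n)) (c c' : ι → ℝ)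
    (hu : ∀ i, ‖u i‖ = 1) (hu' : ∀ i, ‖u' i‖ = 1)
    -- the polyhedra, compact with nonempty interior:
    (hPcpt : IsCompact {x : EuclideanSpace ℝ (Fin n) | ∀ i, ⟪u i, x⟫ ≤ c i})
    (hP'cpt : IsCompact {x : EuclideanSpace ℝ (Fin n) | ∀ i, ⟪u' i, x⟫ ≤ c' i})
    -- each listed half-space contributes an actual facet (irredundancy):
    (hfacet : ∀ i, ∃ x, (∀ j, ⟪u j, x⟫ ≤ c j) ∧ ⟪u i, x⟫ = c i ∧ ∀ j, j ≠ i → ⟪u j, x⟫ < c j)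
    (hfacet' : ∀ i, ∃ x, (∀ j, ⟪u' j, x⟫ ≤ c' j) ∧ ⟪u' i, x⟫ = c' i ∧
      ∀ j, j ≠ i → ⟪u' j, x⟫ < c' j)
    -- combinatorial equivalence (under the identification `Q_i ↔ Q'_i` of facets):
    (hcomb : ∀ s : Finset ι,
      (∃ x, (∀ j, ⟪u j, x⟫ ≤ c j) ∧ ∀ i ∈ s, ⟪u i, x⟫ = c i) ↔
      (∃ x, (∀ j, ⟪u' j, x⟫ ≤ c' j) ∧ ∀ i ∈ s, ⟪u' i, x⟫ = c' i))
    -- all dihedral angles of `P` are at most `π/2`: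
    (hnonobtuse : ∀ i j, i ≠ j →
      (∃ x, (∀ l, ⟪u l, x⟫ ≤ c l) ∧ ⟪u i, x⟫ = c i ∧ ⟪u j, x⟫ = c j) →
      Real.pi - Real.arccos ⟪u i, u j⟫ ≤ Real.pi / 2)
    -- the dihedral angles of `P'` are no larger than the corresponding ones of `P`:
    (hangle_le : ∀ i j, i ≠ j →
      (∃ x, (∀ l, ⟪u l, x⟫ ≤ c l) ∧ ⟪u i, x⟫ = c i ∧ ⟪u j, x⟫ = c j) →
      Real.pi - Real.arccos ⟪u' i, u' j⟫ ≤ Real.pi - Real.arccos ⟪u i, u j⟫) :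
    ∀ i j, i ≠ j →
      (∃ x, (∀ l, ⟪u l, x⟫ ≤ c l) ∧ ⟪u i, x⟫ = c i ∧ ⟪u j, x⟫ = c j) →
      Real.pi - Real.arccos ⟪u' i, u' j⟫ = Real.pi - Real.arccos ⟪u i, u j⟫ := by
  classical
  intro i j hij hadj
  have hmeet (k l : ι) : FacetsMeet u c k l ↔ FacetsMeet u' c' k l := by
    simpa [FacetsMeet, polyhedron, and_assoc] using hcomb {k, l}
  have hface (l : ι) : ∃ x ∈ polyhedron u c, ⟪u l, x⟫ = c l :=
    (hfacet l).imp fun _ hx => ⟨hx.1, hx.2.1⟩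
  have hface' (l : ι) : ∃ x ∈ polyhedron u' c', ⟪u' l, x⟫ = c' l :=
    (hfacet' l).imp fun _ hx => ⟨hx.1, hx.2.1⟩
  have hadj_nonpos (k l : ι) (hkl : k ≠ l) (h : FacetsMeet u c k l) :
      ⟪u' k, u' l⟫ ≤ 0 ∧ ⟪u k, u l⟫ ≤ 0 := by
    have := hnonobtuse k l hkl h
    have := hangle_le k l hkl h
    constructor <;> refine not_lt.1 fun hpos => ?_ <;>
      linarith [Real.arccos_lt_pi_div_two.2 hpos]
  have hle (k l : ι) : ⟪u' k, u' l⟫ ≤ ⟪u k, u l⟫ := by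
    rcases eq_or_ne k l with rfl | hkl
    · rw [inner_self_eq_one_of_norm_eq_one (hu' k), inner_self_eq_one_of_norm_eq_one (hu k)]
    by_cases h : FacetsMeet u c k l
    · exact real_inner_le_of_arccos_le_arccos (hu k) (hu l) (hu' k) (hu' l)
        (by linarith [hangle_le k l hkl h])
    · rw [inner_eq_neg_one_of_not_facetsMeet hu hPcpt hface
          (fun k l hkl h => (hadj_nonpos k l hkl h).2) h,
        inner_eq_neg_one_of_not_facetsMeet hu' hP'cpt hface'
          (fun k l hkl h => (hadj_nonpos k l hkl ((hmeet k l).2 h)).1) (mt (hmeet k l).2 h)]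
  obtain ⟨x, hx, -⟩ := hadj
  obtain ⟨a, ha, hsum⟩ := exists_pos_sum_smul_eq_zero_of_isBounded hPcpt.isBounded ⟨x, hx⟩
  rw [real_inner_eq_of_le_of_sum_smul_eq_zero ha hsum hle i j]

/-- a compact convex polyhedron `P ⊂ ℝⁿ` with nonempty interior all of whose
dihedral angles are at most `π/2` is extremal: if `P'` is a combinatorially equivalent convex
polyhedron with `∠_{ij}(P') ≤ ∠_{ij}(P)` for all pairs of adjacent facets, then
`∠_{ij}(P') = ∠_{ij}(P)` for all such pairs.  Polyhedra are presented by their facet data: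
unit outward normals `u i` and support values `c i`, the polyhedron being
`P = {x | ∀ i, ⟨u i, x⟩ ≤ c i}`; the (interior) dihedral angle along the `(n−2)`-face
`Q_i ∩ Q_j` is `π − arccos ⟨u i, u j⟩`; facets `i, j` are adjacent when `Q_i ∩ Q_j ≠ ∅`;
combinatorial equivalence means the same collections of facets have common points. -/
theorem convex_polyhedron_nonobtuse_extremal
    (n : ℕ) (ι : Type*) [Fintype ι]
    (u u' : ι → EuclideanSpace ℝ (Fin n)) (c c' : ι → ℝ)
    (hu : ∀ i, ‖u i‖ = 1) (hu' : ∀ i, ‖u' i‖ = 1)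
    -- the polyhedra, compact with nonempty interior:
    (hPcpt : IsCompact {x : EuclideanSpace ℝ (Fin n) | ∀ i, ⟪u i, x⟫ ≤ c i})
    (hPint : (interior {x : EuclideanSpace ℝ (Fin n) | ∀ i, ⟪u i, x⟫ ≤ c i}).Nonempty)
    (hP'cpt : IsCompact {x : EuclideanSpace ℝ (Fin n) | ∀ i, ⟪u' i, x⟫ ≤ c' i})
    (hP'int : (interior {x : EuclideanSpace ℝ (Fin n) | ∀ i, ⟪u' i, x⟫ ≤ c' i}).Nonempty)
    -- each listed half-space contributes an actual facet (irredundancy):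
    (hfacet : ∀ i, ∃ x, (∀ j, ⟪u j, x⟫ ≤ c j) ∧ ⟪u i, x⟫ = c i ∧ ∀ j, j ≠ i → ⟪u j, x⟫ < c j)
    (hfacet' : ∀ i, ∃ x, (∀ j, ⟪u' j, x⟫ ≤ c' j) ∧ ⟪u' i, x⟫ = c' i ∧
      ∀ j, j ≠ i → ⟪u' j, x⟫ < c' j)
    -- combinatorial equivalence (under the identification `Q_i ↔ Q'_i` of facets):
    (hcomb : ∀ s : Finset ι,
      (∃ x, (∀ j, ⟪u j, x⟫ ≤ c j) ∧ ∀ i ∈ s, ⟪u i, x⟫ = c i) ↔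
      (∃ x, (∀ j, ⟪u' j, x⟫ ≤ c' j) ∧ ∀ i ∈ s, ⟪u' i, x⟫ = c' i))
    -- all dihedral angles of `P` are at most `π/2`:
    (hnonobtuse : ∀ i j, i ≠ j →
      (∃ x, (∀ l, ⟪u l, x⟫ ≤ c l) ∧ ⟪u i, x⟫ = c i ∧ ⟪u j, x⟫ = c j) →
      Real.pi - Real.arccos ⟪u i, u j⟫ ≤ Real.pi / 2)
    -- the dihedral angles of `P'` are no larger than the corresponding ones of `P`:
    (hangle_le : ∀ i j, i ≠ j →
      (∃ x, (∀ l, ⟪u l, x⟫ ≤ c l) ∧ ⟪u i, x⟫ = c i ∧ ⟪u j, x⟫ = c j) →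
      Real.pi - Real.arccos ⟪u' i, u' j⟫ ≤ Real.pi - Real.arccos ⟪u i, u j⟫) :
    ∀ i j, i ≠ j →
      (∃ x, (∀ l, ⟪u l, x⟫ ≤ c l) ∧ ⟪u i, x⟫ = c i ∧ ⟪u j, x⟫ = c j) →
      Real.pi - Real.arccos ⟪u' i, u' j⟫ = Real.pi - Real.arccos ⟪u i, u j⟫ :=
  convex_polyhedron_nonobtuse_extremal_general n ι u u' c c' hu hu' hPcpt hP'cpt hfacet hfacet'
    hcomb hnonobtuse hangle_le
end
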